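/- Let (Z, m) be a measure space and let u, v : Z → ℝ^k be measurable maps with ∫‖u(z)‖⁴ dm(z) < ∞, ∫‖v(z)‖⁴ dm(z) < ∞, and ⟨u(z), v(z)⟩ ≥ 0 for m-almost every z. Define G(t) = (1/2)·∫ ‖(u(z) + t(v(z) − u(z)))(u(z) + t(v(z) − u(z)))^⊤ − v(z) v(z)^⊤‖_F² dm(z) for t ∈ ℝ. Then G is twice differentiable and G''(0) ≤ −∫ ‖u(z) u(z)^⊤ − v(z) v(z)^⊤‖_F² dm(z) − 4·G'(0). -/

import Mathlib

/-!
With `w = u + t • (v - u)`, the integrand is `⟪w, w⟫² + ⟪v, v⟫² - 2⟪w, v⟫²`, a quartic in `t`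
whose coefficients `cₙ` are products of two inner products of `u`, `v`, `v - u`; these are
integrable by Hölder's inequality since `u, v ∈ L⁴`. So `G` is the polynomial with coefficients
`½ ∫ cₙ`, and `G''(0) + 4 G'(0) + 2 G(0) ≤ 0` follows by integrating the identity
`c₀ + 2 c₁ + c₂ = -(‖u‖² - ‖v‖²)² - 4 ⟪u, v⟫ ‖v - u‖²`, which is `≤ 0` where `⟪u, v⟫ ≥ 0`.
-/

open MeasureTheory Finset
open Polynomial (C X)
open scoped Polynomial RealInnerProductSpace

section
variable {𝕜 : Type*} [NontriviallyNormedField 𝕜]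

theorem deriv_polynomial_eval (p : 𝕜[X]) :
    deriv (fun t => p.eval t) = fun t => p.derivative.eval t :=
  funext fun _ => p.deriv

theorem deriv_polynomial_eval_zero (p : 𝕜[X]) : deriv (fun t => p.eval t) 0 = p.coeff 1 := by
  rw [Polynomial.deriv, ← Polynomial.coeff_zero_eq_eval_zero, Polynomial.coeff_derivative]
  norm_num

theorem deriv_deriv_polynomial_eval_zero (p : 𝕜[X]) :
    deriv (deriv fun t => p.eval t) 0 = 2 * p.coeff 2 := by
  rw [deriv_polynomial_eval, deriv_polynomial_eval_zero, Polynomial.coeff_derivative]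
  norm_num [mul_comm]
end

theorem integral_sum_mul_pow {Z : Type*} [MeasurableSpace Z] {m : Measure Z} {c : ℕ → Z → ℝ}
    (hc : ∀ n, Integrable (c n) m) (N : ℕ) (t : ℝ) :
    ∫ z, ∑ n ∈ range N, c n z * t ^ n ∂m = (∑ n ∈ range N, C (∫ z, c n z ∂m) * X ^ n).eval t := by
  rw [integral_finsetSum _ fun n _ => (hc n).mul_const _]
  simp [Polynomial.eval_finsetSum, integral_mul_const]

theorem coeff_sum_C_mul_X_pow {R : Type*} [Semiring R] (a : ℕ → R) {N n : ℕ} (hn : n < N) :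
    (∑ k ∈ range N, C (a k) * X ^ k).coeff n = a n := by
  simp [Polynomial.finsetSum_coeff, hn]

instance : ENNReal.HolderTriple 4 4 2 := ⟨by
  rw [← two_mul, show (4 : ENNReal) = 2 * 2 by norm_num, ENNReal.mul_inv (by simp) (by simp),
    ← mul_assoc, ENNReal.mul_inv_cancel (by simp) (by simp), one_mul]⟩

theorem memLp_four_of_integrable_norm_pow {Z F : Type*} [MeasurableSpace Z] {m : Measure Z}
    [NormedAddCommGroup F] {f : Z → F} (hf : AEStronglyMeasurable f m)
    (hf4 : Integrable (fun z => ‖f z‖ ^ 4) m) : MemLp f 4 m :=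
  (integrable_norm_rpow_iff hf (by norm_num) (by norm_num)).1 (by simpa using hf4)

section
variable {E : Type*} [NormedAddCommGroup E] [InnerProductSpace ℝ E]

theorem MeasureTheory.MemLp.inner {Z : Type*} [MeasurableSpace Z] {m : Measure Z}
    {p q r : ENNReal} [ENNReal.HolderTriple p q r] {f g : Z → E}
    (hf : MemLp f p m) (hg : MemLp g q m) : MemLp (fun z => ⟪f z, g z⟫) r m :=
  hf.of_bilin (fun x y => ⟪x, y⟫) 1 hg (hf.1.inner hg.1)
    (ae_of_all _ fun z => by simpa using nnnorm_inner_le_nnnorm (𝕜 := ℝ) (f z) (g z))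

noncomputable def segmentCoeff (u v : E) : ℕ → ℝ
  | 0 => ⟪u, u⟫ ^ 2 + ⟪v, v⟫ ^ 2 - 2 * ⟪u, v⟫ ^ 2
  | 1 => 4 * (⟪u, u⟫ * ⟪u, v - u⟫) - 4 * (⟪u, v⟫ * ⟪v - u, v⟫)
  | 2 => 4 * ⟪u, v - u⟫ ^ 2 + 2 * (⟪u, u⟫ * ⟪v - u, v - u⟫) - 2 * ⟪v - u, v⟫ ^ 2
  | 3 => 4 * (⟪u, v - u⟫ * ⟪v - u, v - u⟫)
  | 4 => ⟪v - u, v - u⟫ ^ 2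
  | _ => 0

theorem inner_segment_sq_eq_sum (u v : E) (t : ℝ) :
    ⟪u + t • (v - u), u + t • (v - u)⟫ ^ 2 + ⟪v, v⟫ ^ 2 - 2 * ⟪u + t • (v - u), v⟫ ^ 2
      = ∑ n ∈ range 5, segmentCoeff u v n * t ^ n := by
  simp only [inner_add_left, inner_add_right, inner_smul_left, inner_smul_right, sum_range_succ,
    sum_range_zero, segmentCoeff, real_inner_comm (v - u) u, RCLike.conj_to_real]
  ring

theorem segmentCoeff_zero_add_two_mul_one_add_two (u v : E) :
    segmentCoeff u v 0 + 2 * segmentCoeff u v 1 + segmentCoeff u v 2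
      = -(⟪u, u⟫ - ⟪v, v⟫) ^ 2 - 4 * ⟪u, v⟫ * ⟪v - u, v - u⟫ := by
  simp only [segmentCoeff, inner_sub_left, inner_sub_right, real_inner_comm u v]
  ring

theorem integrable_segmentCoeff {Z : Type*} [MeasurableSpace Z] {m : Measure Z} {u v : Z → E}
    (hu : MemLp u 4 m) (hv : MemLp v 4 m) (n : ℕ) :
    Integrable (fun z => segmentCoeff (u z) (v z) n) m := by
  have hd := hv.sub hu
  have hmul {f g h k : Z → E} (hf : MemLp f 4 m) (hg : MemLp g 4 m) (hh : MemLp h 4 m)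
      (hk : MemLp k 4 m) : Integrable (fun z => ⟪f z, g z⟫ * ⟪h z, k z⟫) m :=
    (hf.inner hg (r := 2)).integrable_mul (hh.inner hk (r := 2))
  have hsq {f g : Z → E} (hf : MemLp f 4 m) (hg : MemLp g 4 m) :
      Integrable (fun z => ⟪f z, g z⟫ ^ 2) m :=
    (hf.inner hg (r := 2)).integrable_sq
  rcases n with _ | _ | _ | _ | _ | n
  · exact ((hsq hu hu).add (hsq hv hv)).sub ((hsq hu hv).const_mul 2)
  · exact ((hmul hu hu hu hd).const_mul 4).sub ((hmul hu hv hd hv).const_mul 4)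
  · exact (((hsq hu hd).const_mul 4).add ((hmul hu hu hd hd).const_mul 2)).sub
      ((hsq hd hv).const_mul 2)
  · exact (hmul hu hd hd hd).const_mul 4
  · exact hsq hd hd
  · simp [segmentCoeff]
end

theorem sum_sum_mul_sub_mul_sq {ι : Type*} [Fintype ι] (x y : EuclideanSpace ℝ ι) :
    ∑ i, ∑ j, (x i * x j - y i * y j) ^ 2 = ⟪x, x⟫ ^ 2 + ⟪y, y⟫ ^ 2 - 2 * ⟪x, y⟫ ^ 2 := by
  simp only [PiLp.inner_apply, RCLike.inner_apply, conj_trivial, sq, sum_mul_sum]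
  simp only [mul_sum, ← sum_add_distrib, ← sum_sub_distrib]
  refine sum_congr rfl fun i _ => sum_congr rfl fun j _ => ?_
  ring

theorem sum_sum_segment_sq_eq_sum {ι : Type*} [Fintype ι] (u v : EuclideanSpace ℝ ι) (t : ℝ) :
    ∑ i, ∑ j, ((u i + t * (v i - u i)) * (u j + t * (v j - u j)) - v i * v j) ^ 2
      = ∑ n ∈ range 5, segmentCoeff u v n * t ^ n := by
  rw [← inner_segment_sq_eq_sum, ← sum_sum_mul_sub_mul_sq]
  simp

/-- Second-order decrease estimate for the matrix-decomposition objective: if `u, v : Z → ℝ^k`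
have integrable fourth-power norms and `⟨u(z), v(z)⟩ ≥ 0` a.e., then the function
`G(t) = (1/2)∫‖(u + t(v−u))(u + t(v−u))ᵀ − v vᵀ‖_F² dm` is twice differentiable and
`G''(0) ≤ −∫‖u uᵀ − v vᵀ‖_F² dm − 4 G'(0)`. The squared Frobenius norm is written as the
double sum of squared entries. -/
theorem matrix_decomposition_second_order_decrease {k : ℕ}
    {Z : Type*} [MeasurableSpace Z] (m : Measure Z)
    (u v : Z → EuclideanSpace ℝ (Fin k))
    (hu : Measurable u) (hv : Measurable v)
    (hu4 : Integrable (fun z => ‖u z‖ ^ 4) m)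
    (hv4 : Integrable (fun z => ‖v z‖ ^ 4) m)
    (hpos : ∀ᵐ z ∂m, 0 ≤ (inner ℝ (u z) (v z) : ℝ))
    (G : ℝ → ℝ)
    (hG : ∀ t : ℝ, G t = (1 / 2 : ℝ) *
      ∫ z, ∑ i : Fin k, ∑ j : Fin k,
        ((u z i + t * (v z i - u z i)) * (u z j + t * (v z j - u z j))
          - v z i * v z j) ^ 2 ∂m) :
    Differentiable ℝ G ∧ Differentiable ℝ (deriv G)
    ∧ deriv (deriv G) 0
        ≤ -(∫ z, ∑ i : Fin k, ∑ j : Fin k, (u z i * u z j - v z i * v z j) ^ 2 ∂m)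
          - 4 * deriv G 0 := by
  set c : ℕ → Z → ℝ := fun n z => segmentCoeff (u z) (v z) n
  have hc : ∀ n, Integrable (c n) m := integrable_segmentCoeff
    (memLp_four_of_integrable_norm_pow hu.aestronglyMeasurable hu4)
    (memLp_four_of_integrable_norm_pow hv.aestronglyMeasurable hv4)
  set p : ℝ[X] := C (1 / 2) * ∑ n ∈ range 5, C (∫ z, c n z ∂m) * X ^ n
  have hp : ∀ n < 5, p.coeff n = 1 / 2 * ∫ z, c n z ∂m := fun n hn => by
    rw [Polynomial.coeff_C_mul, coeff_sum_C_mul_X_pow _ hn]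
  have hGp : G = fun t => p.eval t := funext fun t => by
    simp only [hG, sum_sum_segment_sq_eq_sum, integral_sum_mul_pow hc, p, Polynomial.eval_mul,
      Polynomial.eval_C, c]
  have hG0 : ∫ z, ∑ i, ∑ j, (u z i * u z j - v z i * v z j) ^ 2 ∂m = ∫ z, c 0 z ∂m :=
    integral_congr_ae (ae_of_all _ fun z => by
      simpa [c, sum_range_succ] using sum_sum_segment_sq_eq_sum (u z) (v z) 0)
  have hpointwise : ∀ᵐ z ∂m, c 0 z + 2 * c 1 z + c 2 z ≤ 0 := hpos.mono fun z hz => by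
    simp only [c, segmentCoeff_zero_add_two_mul_one_add_two]
    nlinarith [real_inner_self_nonneg (x := v z - u z), sq_nonneg (⟪u z, u z⟫ - ⟪v z, v z⟫)]
  have hcoeffs : ∫ z, c 0 z ∂m + 2 * ∫ z, c 1 z ∂m + ∫ z, c 2 z ∂m ≤ 0 := by
    rw [← integral_const_mul, ← integral_add (hc 0) ((hc 1).const_mul 2),
      ← integral_add (f := fun z => c 0 z + 2 * c 1 z) ((hc 0).add ((hc 1).const_mul 2)) (hc 2)]
    exact integral_nonpos_of_ae hpointwise
  subst hGp
  refine ⟨p.differentiable, ?_, ?_⟩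
  · rw [deriv_polynomial_eval]
    exact p.derivative.differentiable
  · rw [deriv_polynomial_eval_zero, deriv_deriv_polynomial_eval_zero, hp 1 (by norm_num),
      hp 2 (by norm_num), hG0]
    linarith
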